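/- Let a, w₃, c₃, β, L be real numbers with a ≠ 0 and L > 0. Define the 2×2 complex matrices C⁰ = a·[[1,−1],[−1,1]] and C¹ = −(i w₃ L²/2)·[[1,1],[1,1]] + i β·[[0,1],[−1,0]] − (i w₃ c₃²/(2L²))·[[1,−1],[−1,1]]. Then there exist ω₀ > 0 and functions λ₁, λ₂ : ℝ → ℂ such that for every real ω with |ω| < ω₀, λ₁(ω) and λ₂(ω) are eigenvalues of C⁰ + ω C¹ (i.e. det(C⁰ + ω C¹ − λᵢ(ω)·I) = 0 for i = 1,2), and as ω → 0: λ₁(ω) = −i ω w₃ L² + O(ω²) and λ₂(ω) = 2a − i ω w₃ c₃²/L² + O(ω²). -/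

import Mathlib

open Asymptotics Topology

noncomputable section

/-- The periodic capacitance matrix `C⁰ = a [[1,−1],[−1,1]]` (Lemma 3.5 of the paper). -/
def Cmat0 (a : ℝ) : Matrix (Fin 2) (Fin 2) ℂ := (a : ℂ) • !![1, -1; -1, 1]

/-- The higher-order capacitance matrix
`C¹ = −(i w₃ L²/2)[[1,1],[1,1]] + iβ[[0,1],[−1,0]] − (i w₃ c₃²/(2L²))[[1,−1],[−1,1]]`
(Lemma 3.6(ii) of the paper). -/
def Cmat1 (w3 c3 β L : ℝ) : Matrix (Fin 2) (Fin 2) ℂ :=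
  (-(Complex.I * (w3 : ℂ) * (L : ℂ) ^ 2) / 2) • !![1, 1; 1, 1] +
    (Complex.I * (β : ℂ)) • !![0, 1; -1, 0] +
    (-(Complex.I * (w3 : ℂ) * (c3 : ℂ) ^ 2) / (2 * (L : ℂ) ^ 2)) • !![1, -1; -1, 1]

/-!
Writing `C⁰ + ωC¹ = [[m, x + iωβ], [x − iωβ, m]]` (`m = pencilDiag`, `x = pencilOffDiag`), the
eigenvalues are `m ∓ f` with `f² = x² + ω²β²`. Taking for `f` the square root closer to `−x` gives
`|f + x| · |x| ≤ ω²β²`, and `x → −a ≠ 0`, so `f = −x + O(ω²)`. The expansions then follow from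
`m + x = −iωw₃L²` and `m − x = 2a − iωw₃c₃²/L²`.
-/

open Filter

lemma RCLike.norm_add_mul_norm_le_norm_sq_sub_sq {𝕜 : Type*} [RCLike 𝕜] {f x : 𝕜}
    (h : ‖f + x‖ ≤ ‖f - x‖) : ‖f + x‖ * ‖x‖ ≤ ‖f ^ 2 - x ^ 2‖ := by
  have hx : ‖x‖ ≤ ‖f - x‖ := by
    have := norm_sub_le (f + x) (f - x)
    rw [show f + x - (f - x) = (2 : 𝕜) * x by ring, norm_mul, RCLike.norm_two] at this
    linarith
  calc ‖f + x‖ * ‖x‖ ≤ ‖f + x‖ * ‖f - x‖ := by gcongr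
    _ = ‖f ^ 2 - x ^ 2‖ := by rw [← norm_mul]; ring_nf

theorem Complex.exists_sq_eq_sq_add_norm_add_mul_le (x d : ℂ) :
    ∃ f : ℂ, f ^ 2 = x ^ 2 + d ∧ ‖f + x‖ * ‖x‖ ≤ ‖d‖ := by
  obtain ⟨r, hr⟩ := IsAlgClosed.exists_pow_nat_eq (x ^ 2 + d) two_pos
  have key {f : ℂ} (hf : f ^ 2 = x ^ 2 + d) (h : ‖f + x‖ ≤ ‖f - x‖) :
      ‖f + x‖ * ‖x‖ ≤ ‖d‖ := by
    simpa [hf] using RCLike.norm_add_mul_norm_le_norm_sq_sub_sq h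
  by_cases h : ‖r + x‖ ≤ ‖r - x‖
  · exact ⟨r, hr, key hr h⟩
  · have hr' : (-r) ^ 2 = x ^ 2 + d := by rw [neg_sq, hr]
    refine ⟨-r, hr', key hr' ?_⟩
    rw [neg_add_eq_sub, norm_sub_rev, ← neg_add', norm_neg]
    exact (not_le.mp h).le

theorem Complex.exists_sq_eq_sq_add_isBigO {α E : Type*} [Norm E] {l : Filter α}
    {x d : α → ℂ} {g : α → E} {c : ℂ} (hc : c ≠ 0) (hx : Tendsto x l (𝓝 c))
    (hd : d =O[l] g) :
    ∃ f : α → ℂ, (∀ z, f z ^ 2 = x z ^ 2 + d z) ∧ (fun z ↦ f z + x z) =O[l] g := by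
  choose f hf hbound using fun z ↦ exists_sq_eq_sq_add_norm_add_mul_le (x z) (d z)
  refine ⟨f, hf, ?_⟩
  have hfx : (fun z ↦ f z + x z) =O[l] fun z ↦ d z * (x z)⁻¹ := by
    refine IsBigO.of_bound' ?_
    filter_upwards [hx.eventually_ne hc] with z hz
    rw [norm_mul, norm_inv, ← div_eq_mul_inv, le_div_iff₀ (norm_pos_iff.mpr hz)]
    exact hbound z
  have hdx : (fun z ↦ d z * (x z)⁻¹) =O[l] d := by
    simpa using (isBigO_refl d l).mul ((hx.inv₀ hc).isBigO_one ℂ)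
  exact hfx.trans (hdx.trans hd)

def pencilDiag (a w3 c3 L ω : ℝ) : ℂ :=
  a - Complex.I * ω * w3 * (L ^ 2 + c3 ^ 2 / L ^ 2) / 2

def pencilOffDiag (a w3 c3 L ω : ℝ) : ℂ :=
  -a - Complex.I * ω * w3 * (L ^ 2 - c3 ^ 2 / L ^ 2) / 2

lemma det_pencil_sub_smul_one (a w3 c3 β L ω : ℝ) (lam : ℂ) :
    (Cmat0 a + (ω : ℂ) • Cmat1 w3 c3 β L - lam • (1 : Matrix (Fin 2) (Fin 2) ℂ)).det =
      (pencilDiag a w3 c3 L ω - lam) ^ 2 - (pencilOffDiag a w3 c3 L ω ^ 2 + (ω * β : ℂ) ^ 2) := by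
  simp only [Cmat0, Cmat1, pencilDiag, pencilOffDiag, Matrix.det_fin_two, Matrix.sub_apply,
    Matrix.add_apply, Matrix.smul_apply, Matrix.one_apply, Matrix.of_apply, Matrix.cons_val',
    Matrix.cons_val_zero, Matrix.cons_val_one, Matrix.cons_val_fin_one, smul_eq_mul, mul_one,
    mul_zero, mul_neg, add_zero, sub_zero, Fin.isValue, zero_ne_one, one_ne_zero, ↓reduceIte]
  linear_combination (ω : ℂ) ^ 2 * β ^ 2 * Complex.I_sq

lemma tendsto_pencilOffDiag_zero (a w3 c3 L : ℝ) :
    Tendsto (pencilOffDiag a w3 c3 L) (𝓝 0) (𝓝 (-a)) := by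
  have : Continuous (pencilOffDiag a w3 c3 L) := by unfold pencilOffDiag; fun_prop
  simpa [pencilOffDiag] using this.tendsto 0

theorem eigenvalue_perturbation_general (a w3 c3 β L : ℝ) (ha : a ≠ 0) :
    ∃ ω₀ > (0 : ℝ), ∃ lam1 lam2 : ℝ → ℂ,
      (∀ ω : ℝ, |ω| < ω₀ →
        Matrix.det (Cmat0 a + (ω : ℂ) • Cmat1 w3 c3 β L -
          lam1 ω • (1 : Matrix (Fin 2) (Fin 2) ℂ)) = 0 ∧
        Matrix.det (Cmat0 a + (ω : ℂ) • Cmat1 w3 c3 β L -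
          lam2 ω • (1 : Matrix (Fin 2) (Fin 2) ℂ)) = 0) ∧
      (fun ω : ℝ => lam1 ω - (-Complex.I * (ω : ℂ) * (w3 : ℂ) * (L : ℂ) ^ 2))
        =O[𝓝 (0 : ℝ)] (fun ω : ℝ => ω ^ 2) ∧
      (fun ω : ℝ => lam2 ω -
          ((2 * a : ℝ) - Complex.I * (ω : ℂ) * (w3 : ℂ) * (c3 : ℂ) ^ 2 / (L : ℂ) ^ 2))
        =O[𝓝 (0 : ℝ)] (fun ω : ℝ => ω ^ 2) := by
  have hd : (fun ω : ℝ ↦ ((ω : ℂ) * β) ^ 2) =O[𝓝 0] fun ω : ℝ ↦ ω ^ 2 :=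
    isBigO_of_le' (𝓝 0) (c := β ^ 2) fun ω ↦ by simp [mul_pow, mul_comm]
  obtain ⟨f, hf, hfO⟩ := Complex.exists_sq_eq_sq_add_isBigO
    (by exact_mod_cast neg_ne_zero.mpr ha) (tendsto_pencilOffDiag_zero a w3 c3 L) hd
  refine ⟨1, one_pos, fun ω ↦ pencilDiag a w3 c3 L ω - f ω,
    fun ω ↦ pencilDiag a w3 c3 L ω + f ω, fun ω _ ↦ ⟨?_, ?_⟩, ?_, ?_⟩
  · rw [det_pencil_sub_smul_one, ← hf]; ring
  · rw [det_pencil_sub_smul_one, ← hf]; ring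
  · refine hfO.neg_left.congr_left fun ω ↦ ?_
    simp only [pencilDiag, pencilOffDiag]; ring
  · refine hfO.congr_left fun ω ↦ ?_
    simp only [pencilDiag, pencilOffDiag]; push_cast; ring

/-- Eigenvalue perturbation expansion for `C⁰ + ω C¹` (key step of Theorem 4.3):
there are eigenvalues `λ₁(ω) = −iω w₃ L² + O(ω²)` and `λ₂(ω) = 2a − iω w₃ c₃²/L² + O(ω²)`. -/
theorem eigenvalue_perturbation (a w3 c3 β L : ℝ) (ha : a ≠ 0) (hL : 0 < L) :
    ∃ ω₀ > (0 : ℝ), ∃ lam1 lam2 : ℝ → ℂ,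
      (∀ ω : ℝ, |ω| < ω₀ →
        Matrix.det (Cmat0 a + (ω : ℂ) • Cmat1 w3 c3 β L -
          lam1 ω • (1 : Matrix (Fin 2) (Fin 2) ℂ)) = 0 ∧
        Matrix.det (Cmat0 a + (ω : ℂ) • Cmat1 w3 c3 β L -
          lam2 ω • (1 : Matrix (Fin 2) (Fin 2) ℂ)) = 0) ∧
      (fun ω : ℝ => lam1 ω - (-Complex.I * (ω : ℂ) * (w3 : ℂ) * (L : ℂ) ^ 2))
        =O[𝓝 (0 : ℝ)] (fun ω : ℝ => ω ^ 2) ∧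
      (fun ω : ℝ => lam2 ω -
          ((2 * a : ℝ) - Complex.I * (ω : ℂ) * (w3 : ℂ) * (c3 : ℂ) ^ 2 / (L : ℂ) ^ 2))
        =O[𝓝 (0 : ℝ)] (fun ω : ℝ => ω ^ 2) :=
  eigenvalue_perturbation_general a w3 c3 β L ha
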